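/- The update function 𝐮 : ⋆ᵢ₌₁ⁿ Γᵢ → Γ₁ × ⋯ × Γₙ is a graph homomorphism from the free product to the cartesian (box) product of the factors: whenever ṽ and w̃ are adjacent in the free product, 𝐮(ṽ) and 𝐮(w̃) differ in exactly one coordinate j, and in that coordinate u_j(ṽ) and u_j(w̃) are adjacent in Γ_j. -/

import Mathlib

variable {ι : Type} [DecidableEq ι]

abbrev Letter (V : ι → Type) := Σ i, V i

def upd {V : ι → Type} (u : ∀ i, V i) : List (Letter V) → ∀ i, V i
  | [] => u
  | ⟨j, x⟩ :: w => Function.update (upd u w) j x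

def Adm {V : ι → Type} (u : ∀ i, V i) (w : List (Letter V)) : Prop :=
  w.Chain' (fun a b => a.1 ≠ b.1) ∧
    ∀ (a : Letter V) (p : List (Letter V)), a :: p <:+ w → a.2 ≠ upd u p a.1

def Word {V : ι → Type} (u : ∀ i, V i) := {w : List (Letter V) // Adm u w}

def emptyWord {V : ι → Type} (u : ∀ i, V i) : Word u :=
  ⟨[], List.IsChain.nil, by intro a p h; simp at h⟩

def Pre {V : ι → Type} (G : ∀ i, SimpleGraph (V i)) (u : ∀ i, V i)
    (v w : List (Letter V)) : Prop :=
  (∃ (p : List (Letter V)) (j : ι) (a b : V j),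
      (G j).Adj a b ∧ v = ⟨j, a⟩ :: p ∧ w = ⟨j, b⟩ :: p) ∨
  (∃ (j : ι) (a : V j), (G j).Adj (upd u v j) a ∧ w = ⟨j, a⟩ :: v)

def freeProd {V : ι → Type} (G : ∀ i, SimpleGraph (V i)) (u : ∀ i, V i) :
    SimpleGraph (Word u) :=
  SimpleGraph.fromRel fun v w => Pre G u v.1 w.1

def BoxAdj {κ : Type*} {V : κ → Type*} (G : ∀ i, SimpleGraph (V i)) (f g : ∀ i, V i) : Prop :=
  ∃ j, (G j).Adj (f j) (g j) ∧ ∀ i, i ≠ j → f i = g i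

theorem BoxAdj.symm {κ : Type*} {V : κ → Type*} {G : ∀ i, SimpleGraph (V i)} {f g : ∀ i, V i}
    (h : BoxAdj G f g) : BoxAdj G g f :=
  let ⟨j, hadj, heq⟩ := h
  ⟨j, hadj.symm, fun i hi => (heq i hi).symm⟩

theorem boxAdj_update_update {V : ι → Type} {G : ∀ i, SimpleGraph (V i)} (f : ∀ i, V i)
    {j : ι} {a b : V j} (hab : (G j).Adj a b) :
    BoxAdj G (Function.update f j a) (Function.update f j b) :=
  ⟨j, by simpa using hab, fun i hi => by simp [Function.update_of_ne hi]⟩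

theorem boxAdj_update {V : ι → Type} {G : ∀ i, SimpleGraph (V i)} (f : ∀ i, V i)
    {j : ι} {a : V j} (ha : (G j).Adj (f j) a) :
    BoxAdj G f (Function.update f j a) := by
  simpa using boxAdj_update_update (G := G) f ha

theorem boxAdj_upd_of_pre {V : ι → Type} {G : ∀ i, SimpleGraph (V i)} {u : ∀ i, V i}
    {v w : List (Letter V)} (h : Pre G u v w) : BoxAdj G (upd u v) (upd u w) := by
  rcases h with ⟨p, j, a, b, hab, rfl, rfl⟩ | ⟨j, a, hadj, rfl⟩
  · exact boxAdj_update_update (upd u p) hab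
  · exact boxAdj_update (upd u v) hadj

theorem stmt8_general {n : ℕ} {V : Fin n → Type} (G : ∀ i, SimpleGraph (V i))
    (u : ∀ i, V i)
    (v w : Word u) (h : (freeProd G u).Adj v w) :
    ∃ j : Fin n, (G j).Adj (upd u v.1 j) (upd u w.1 j) ∧
      ∀ i : Fin n, i ≠ j → upd u v.1 i = upd u w.1 i := by
  rcases h with ⟨-, hvw | hwv⟩
  · exact boxAdj_upd_of_pre hvw
  · exact (boxAdj_upd_of_pre hwv).symm

/-- The update function is a graph homomorphism from the free product to
the cartesian (box) product: adjacent vertices of the free product have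
updates differing in exactly one coordinate, adjacent in that coordinate. -/
theorem stmt8 {n : ℕ} {V : Fin n → Type} (G : ∀ i, SimpleGraph (V i))
    (u : ∀ i, V i) (hconn : ∀ i, (G i).Connected)
    (v w : Word u) (h : (freeProd G u).Adj v w) :
    ∃ j : Fin n, (G j).Adj (upd u v.1 j) (upd u w.1 j) ∧
      ∀ i : Fin n, i ≠ j → upd u v.1 i = upd u w.1 i :=
  stmt8_general G u v w h
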